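/- Let k be a field of characteristic 3. For every λ ∈ k×, the plane cubic C_λ: x³ + y³ + z³ − λxyz = 0 is smooth, its set of inflection points is {[1,−1,0], [1,0,−1], [0,1,−1]}, and its inflection lines are exactly the three lines x = 0, y = 0, z = 0. In particular, all the curves C_λ (λ ∈ k×) share the same inflection points and the same inflection lines, so a smooth plane cubic in characteristic 3 cannot be recovered from its inflection lines even together with its inflection points. -/

import Mathlib

open MvPolynomial Polynomial

noncomputable section

namespace Infl

variable {K : Type*} [Field K]

def dotv (w p : Fin 3 → K) : K := ∑ i, w i * p i

def lineRestrict (F : MvPolynomial (Fin 3) K) (a b : Fin 3 → K) : Polynomial K :=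
  MvPolynomial.aeval (fun i => Polynomial.C (a i) + Polynomial.C (b i) * Polynomial.X) F

def contactAt (F : MvPolynomial (Fin 3) K) (a b : Fin 3 → K) : ℕ :=
  (lineRestrict F a b).rootMultiplicity 0

def IsSmoothCurve (F : MvPolynomial (Fin 3) K) (d : ℕ) : Prop :=
  F.IsHomogeneous d ∧ F ≠ 0 ∧
    ∀ p : Fin 3 → K, p ≠ 0 → eval p F = 0 → ∃ i, eval p (pderiv i F) ≠ 0

/-- `w` is (a dual vector of) an inflection line of `{F = 0}`: it meets the curve at
some point with intersection multiplicity at least 3 and is not a component. -/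
def IsInflLine (F : MvPolynomial (Fin 3) K) (w : Fin 3 → K) : Prop :=
  w ≠ 0 ∧ ∃ a b : Fin 3 → K, dotv w a = 0 ∧ dotv w b = 0 ∧
    LinearIndependent K ![a, b] ∧ lineRestrict F a b ≠ 0 ∧ 3 ≤ contactAt F a b

/-- `p` is an inflection point of `{F = 0}`: some line meets the curve at `p` with
intersection multiplicity at least 3 (and is not a component). -/
def IsInflPoint (F : MvPolynomial (Fin 3) K) (p : Fin 3 → K) : Prop :=
  eval p F = 0 ∧ ∃ b : Fin 3 → K, LinearIndependent K ![p, b] ∧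
    lineRestrict F p b ≠ 0 ∧ 3 ≤ contactAt F p b

/-- Proportionality of vectors (equality in the projective plane). -/
def propor (p q : Fin 3 → K) : Prop := ∃ c : K, c ≠ 0 ∧ p = c • q

variable {k : Type*} [Field k]

def bar (F : MvPolynomial (Fin 3) k) : MvPolynomial (Fin 3) (AlgebraicClosure k) :=
  MvPolynomial.map (algebraMap k (AlgebraicClosure k)) F

/-- The Hesse-type cubic `x³ + y³ + z³ − λ·xyz`. -/
def hesseCubic (lam : k) : MvPolynomial (Fin 3) k :=
  X 0 ^ 3 + X 1 ^ 3 + X 2 ^ 3 - MvPolynomial.C lam * (X 0 * X 1 * X 2)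

/-!
In characteristic 3 one has `x³ + y³ + z³ = (x + y + z)³`, so `C_λ` is `(x + y + z)³ = λxyz`.
Restricted to the line `a + t b` it becomes `F(a) - λ m(a,b) t - λ m(b,a) t² + F(b) t³`, where
`m` is the polarization of `xyz`. Contact order at least 3 at `a` thus means `F(a) = 0` and
`m(a,b) = m(b,a) = 0`; for independent `a, b` these force a coordinate `aᵢ` to vanish, then
`a₀ + a₁ + a₂ = 0` and `bᵢ = 0`. So the flexes are the three points of `C_λ` on the coordinate
triangle, the inflection lines are its sides, and neither depends on `λ`. Smoothness is equally
direct: the partials `-λyz, -λxz, -λxy` vanish together only where two coordinates do.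
-/

open scoped Matrix

lemma eq_zero_of_fin_three {R : Type*} [Zero R] {p : Fin 3 → R}
    (h₀ : p 0 = 0) (h₁ : p 1 = 0) (h₂ : p 2 = 0) : p = 0 := by
  funext i; fin_cases i <;> assumption

lemma prod_fin_three_eq_zero {M : Type*} [CommMonoidWithZero M] {c : Fin 3 → M} {i : Fin 3}
    (hci : c i = 0) : c 0 * c 1 * c 2 = 0 := by
  rw [← Fin.prod_univ_three]
  exact Finset.prod_eq_zero (Finset.mem_univ i) hci

lemma cross_eq_zero_of_coord_eq_zero {R : Type*} [CommRing R] {a b : Fin 3 → R} {i : Fin 3}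
    (hai : a i = 0) (hbi : b i = 0) (hsa : a 0 + a 1 + a 2 = 0) (hsb : b 0 + b 1 + b 2 = 0) :
    a ⨯₃ b = 0 := by
  fin_cases i <;> simp only [Fin.zero_eta, Fin.mk_one, Fin.reduceFinMk] at hai hbi <;>
    apply eq_zero_of_fin_three <;> simp [cross_apply] <;> grind

lemma exists_linearIndependent_of_coord_eq_zero {p : Fin 3 → K} {i : Fin 3} (hp : p ≠ 0)
    (hpi : p i = 0) (hs : p 0 + p 1 + p 2 = 0) :
    ∃ b : Fin 3 → K, b i = 0 ∧ LinearIndependent K ![p, b] := by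
  refine ⟨Pi.single (i + 1) 1, by fin_cases i <;> simp, ?_⟩
  rw [← crossProduct_ne_zero_iff_linearIndependent]
  intro h
  apply hp
  fin_cases i <;> simp [cross_apply] at hpi h <;>
    exact eq_zero_of_fin_three (by grind) (by grind) (by grind)

lemma eq_zero_of_dotv_eq_zero {w a b : Fin 3 → K} {i : Fin 3} (hai : a i = 0) (hbi : b i = 0)
    (hind : a ⨯₃ b ≠ 0) (hwa : dotv w a = 0) (hwb : dotv w b = 0) : ∀ j ≠ i, w j = 0 := by
  intro j hj
  by_contra hwj
  apply hind
  simp only [dotv, Fin.sum_univ_three] at hwa hwb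
  fin_cases i <;> fin_cases j <;> simp [cross_apply] at hai hbi hj hwj ⊢ <;> grind

lemma exists_coord_eq_zero_iff_propor {p : Fin 3 → K} (hp : p ≠ 0) :
    (∃ i, p i = 0 ∧ p 0 + p 1 + p 2 = 0) ↔
      propor p ![1, -1, 0] ∨ propor p ![1, 0, -1] ∨ propor p ![0, 1, -1] := by
  constructor
  · rintro ⟨i, hpi, hs⟩
    have hne (j : Fin 3) (hj : p j = 0) (hji : j ≠ i) : False :=
      hp (by fin_cases i <;> fin_cases j <;> simp at hpi hj hji <;>
        exact eq_zero_of_fin_three (by grind) (by grind) (by grind))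
    fin_cases i
    · refine .inr (.inr ⟨p 1, fun h => hne 1 h (by decide), ?_⟩)
      funext j; fin_cases j <;> simp at hpi ⊢ <;> grind
    · refine .inr (.inl ⟨p 0, fun h => hne 0 h (by decide), ?_⟩)
      funext j; fin_cases j <;> simp at hpi ⊢ <;> grind
    · refine .inl ⟨p 0, fun h => hne 0 h (by decide), ?_⟩
      funext j; fin_cases j <;> simp at hpi ⊢ <;> grind
  · rintro (⟨c, -, rfl⟩ | ⟨c, -, rfl⟩ | ⟨c, -, rfl⟩)
    exacts [⟨2, by simp⟩, ⟨1, by simp⟩, ⟨0, by simp⟩]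

lemma exists_forall_ne_eq_zero_iff_propor {w : Fin 3 → K} (hw : w ≠ 0) :
    (∃ i, ∀ j ≠ i, w j = 0) ↔
      propor w ![1, 0, 0] ∨ propor w ![0, 1, 0] ∨ propor w ![0, 0, 1] := by
  constructor
  · rintro ⟨i, hwi⟩
    have hi : w i ≠ 0 := fun h => hw (funext fun j => by
      by_cases hj : j = i
      · rw [hj, h]; rfl
      · exact hwi j hj)
    fin_cases i
    · exact .inl ⟨w 0, hi, by funext j; fin_cases j <;> simp [hwi]⟩
    · exact .inr (.inl ⟨w 1, hi, by funext j; fin_cases j <;> simp [hwi]⟩)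
    · exact .inr (.inr ⟨w 2, hi, by funext j; fin_cases j <;> simp [hwi]⟩)
  · rintro (⟨c, -, rfl⟩ | ⟨c, -, rfl⟩ | ⟨c, -, rfl⟩)
    exacts [⟨0, by simp [Fin.forall_fin_succ]⟩, ⟨1, by simp [Fin.forall_fin_succ]⟩,
      ⟨2, by simp [Fin.forall_fin_succ]⟩]

lemma le_contactAt_iff {F : MvPolynomial (Fin 3) K} {a b : Fin 3 → K} {n : ℕ}
    (hF : lineRestrict F a b ≠ 0) :
    n ≤ contactAt F a b ↔ ∀ m < n, (lineRestrict F a b).coeff m = 0 := by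
  rw [contactAt, rootMultiplicity_eq_natTrailingDegree']
  exact ⟨fun h m hm => coeff_eq_zero_of_lt_natTrailingDegree (hm.trans_le h),
    le_natTrailingDegree hF⟩

def mixedProd {R : Type*} [CommRing R] (a b : Fin 3 → R) : R :=
  b 0 * a 1 * a 2 + a 0 * b 1 * a 2 + a 0 * a 1 * b 2

lemma mixedProd_eq_zero_of_coord_eq_zero {R : Type*} [CommRing R] {a b : Fin 3 → R} {i : Fin 3}
    (hai : a i = 0) (hbi : b i = 0) : mixedProd a b = 0 := by
  fin_cases i <;> simp_all [mixedProd]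

lemma coord_eq_zero_of_mixedProd_eq_zero {a b : Fin 3 → K} {i : Fin 3} (ha : a ≠ 0)
    (hai : a i = 0) (hsa : a 0 + a 1 + a 2 = 0) (hab : mixedProd a b = 0) : b i = 0 := by
  by_contra hb
  fin_cases i <;> simp [mixedProd] at hai hab hb <;>
    exact ha (eq_zero_of_fin_three (by grind) (by grind) (by grind))

lemma prod_eq_zero_of_mixedProd_eq_zero (h3 : (3 : K) = 0) {a b : Fin 3 → K}
    (hab : mixedProd a b = 0) (hba : mixedProd b a = 0) (hind : a ⨯₃ b ≠ 0) :
    a 0 * a 1 * a 2 = 0 := by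
  by_contra hprod
  simp only [mul_eq_zero, not_or] at hprod
  obtain ⟨⟨ha0, ha1⟩, ha2⟩ := hprod
  have hsq (x y : K) (hy : y ≠ 0) (h : x ^ 2 * y = 0) : x = 0 :=
    pow_eq_zero_iff two_ne_zero |>.mp ((mul_eq_zero.mp h).resolve_right hy)
  unfold mixedProd at hab hba
  have h2 := hsq (a 0 * b 1 - a 1 * b 0) (a 2) ha2 (by
    linear_combination (b 0 * a 1 + b 1 * a 0) * hab - (a 0 * a 1) * hba
      - (a 0 * a 1 * a 2 * b 0 * b 1) * h3)
  have h1 := hsq (a 2 * b 0 - a 0 * b 2) (a 1) ha1 (by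
    linear_combination (b 0 * a 2 + b 2 * a 0) * hab - (a 0 * a 2) * hba
      - (a 0 * a 1 * a 2 * b 0 * b 2) * h3)
  have h0 : a 1 * b 2 - a 2 * b 1 = 0 :=
    (mul_eq_zero.mp (by linear_combination -a 2 * h2 - a 1 * h1 : a 0 * _ = 0)).resolve_left ha0
  exact hind (eq_zero_of_fin_three (by simpa [cross_apply] using h0)
    (by simpa [cross_apply] using h1) (by simpa [cross_apply] using h2))

lemma eval_hesseCubic (μ : K) (p : Fin 3 → K) :
    eval p (hesseCubic μ) = p 0 ^ 3 + p 1 ^ 3 + p 2 ^ 3 - μ * (p 0 * p 1 * p 2) := by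
  simp [hesseCubic]

lemma eval_hesseCubic_of_three_eq_zero (h3 : (3 : K) = 0) (μ : K) (p : Fin 3 → K) :
    eval p (hesseCubic μ) = (p 0 + p 1 + p 2) ^ 3 - μ * (p 0 * p 1 * p 2) := by
  rw [eval_hesseCubic]
  linear_combination (-(p 0 ^ 2 * p 1 + p 0 * p 1 ^ 2 + p 0 ^ 2 * p 2 + p 1 ^ 2 * p 2
    + p 0 * p 2 ^ 2 + p 1 * p 2 ^ 2 + 2 * p 0 * p 1 * p 2)) * h3

lemma isHomogeneous_hesseCubic (μ : K) : (hesseCubic μ).IsHomogeneous 3 := by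
  have hX (i : Fin 3) : (X i : MvPolynomial (Fin 3) K).IsHomogeneous 1 := isHomogeneous_X K i
  refine .sub ((((hX 0).pow 3).add ((hX 1).pow 3)).add ((hX 2).pow 3)) ?_
  simpa using (isHomogeneous_C (Fin 3) μ).mul (((hX 0).mul (hX 1)).mul (hX 2))

lemma hesseCubic_ne_zero (μ : K) : hesseCubic μ ≠ 0 := fun h => by
  simpa [eval_hesseCubic] using congrArg (MvPolynomial.eval ![1, 0, 0]) h

lemma eq_of_hesseCubic_eq_smul {μ ν c : K} (h : hesseCubic ν = c • hesseCubic μ) : μ = ν := by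
  rw [MvPolynomial.smul_eq_C_mul] at h
  have h₁ := congrArg (MvPolynomial.eval ![1, 0, 0]) h
  have h₂ := congrArg (MvPolynomial.eval ![1, 1, 1]) h
  simp only [MvPolynomial.eval_mul, MvPolynomial.eval_C, eval_hesseCubic] at h₁ h₂
  norm_num [Matrix.cons_val_two] at h₁ h₂
  subst h₁
  linear_combination h₂

lemma bar_hesseCubic (μ : k) :
    bar (hesseCubic μ) = hesseCubic (algebraMap k (AlgebraicClosure k) μ) := by
  simp [bar, hesseCubic]

lemma isSmoothCurve_hesseCubic (h3 : (3 : K) = 0) {μ : K} (hμ : μ ≠ 0) :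
    IsSmoothCurve (hesseCubic μ) 3 := by
  refine ⟨isHomogeneous_hesseCubic μ, hesseCubic_ne_zero μ, fun p hp hF => ?_⟩
  by_contra! hsing
  have h12 : p 1 * p 2 = 0 := by simpa [hesseCubic, h3, hμ, or_comm] using hsing 0
  have h02 : p 0 * p 2 = 0 := by simpa [hesseCubic, h3, hμ, or_comm] using hsing 1
  have h01 : p 0 * p 1 = 0 := by simpa [hesseCubic, h3, hμ] using hsing 2
  have hsum : p 0 + p 1 + p 2 = 0 := by
    rw [eval_hesseCubic_of_three_eq_zero h3, h01, zero_mul, mul_zero, sub_zero] at hF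
    exact pow_eq_zero_iff three_ne_zero |>.mp hF
  have hsq (i : Fin 3) (h : p i ^ 2 = 0) : p i = 0 := pow_eq_zero_iff two_ne_zero |>.mp h
  exact hp <| eq_zero_of_fin_three
    (hsq 0 (by linear_combination p 0 * hsum - h01 - h02))
    (hsq 1 (by linear_combination p 1 * hsum - h01 - h12))
    (hsq 2 (by linear_combination p 2 * hsum - h02 - h12))

lemma lineRestrict_hesseCubic (h3 : (3 : K) = 0) (μ : K) (a b : Fin 3 → K) :
    lineRestrict (hesseCubic μ) a b =
      Polynomial.C (eval a (hesseCubic μ)) - Polynomial.C (μ * mixedProd a b) * Polynomial.X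
        - Polynomial.C (μ * mixedProd b a) * Polynomial.X ^ 2
        + Polynomial.C (eval b (hesseCubic μ)) * Polynomial.X ^ 3 := by
  have h3' : (3 : K[X]) = 0 := by rw [← map_ofNat Polynomial.C 3, h3, map_zero]
  rw [eval_hesseCubic, eval_hesseCubic]
  simp only [lineRestrict, hesseCubic, mixedProd, map_add, map_sub, map_mul,
    map_pow, MvPolynomial.aeval_X, MvPolynomial.aeval_C, Polynomial.algebraMap_eq]
  linear_combination (norm := (simp only [map_add, map_mul, map_pow]; ring))
    (Polynomial.C (a 0 ^ 2 * b 0 + a 1 ^ 2 * b 1 + a 2 ^ 2 * b 2) * Polynomial.X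
      + Polynomial.C (a 0 * b 0 ^ 2 + a 1 * b 1 ^ 2 + a 2 * b 2 ^ 2) * Polynomial.X ^ 2) * h3'

lemma three_le_contactAt_hesseCubic_iff (h3 : (3 : K) = 0) {μ : K} (hμ : μ ≠ 0)
    {a b : Fin 3 → K} (hind : LinearIndependent K ![a, b]) :
    lineRestrict (hesseCubic μ) a b ≠ 0 ∧ 3 ≤ contactAt (hesseCubic μ) a b ↔
      ∃ i, a i = 0 ∧ b i = 0 ∧ a 0 + a 1 + a 2 = 0 := by
  have ha : a ≠ 0 := hind.ne_zero 0
  rw [← crossProduct_ne_zero_iff_linearIndependent] at hind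
  constructor
  · rintro ⟨hne, hc⟩
    have hcoeff := (le_contactAt_iff hne).1 hc
    simp only [lineRestrict_hesseCubic h3, Polynomial.coeff_add,
      Polynomial.coeff_sub, Polynomial.coeff_C, Polynomial.coeff_C_mul_X,
      Polynomial.coeff_C_mul_X_pow] at hcoeff
    have hFa : eval a (hesseCubic μ) = 0 := by simpa using hcoeff 0 (by norm_num)
    have hab : mixedProd a b = 0 := by simpa [hμ] using hcoeff 1 (by norm_num)
    have hba : mixedProd b a = 0 := by simpa [hμ] using hcoeff 2 (by norm_num)
    have hprod := prod_eq_zero_of_mixedProd_eq_zero h3 hab hba hind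
    have hsum : a 0 + a 1 + a 2 = 0 := by
      rw [eval_hesseCubic_of_three_eq_zero h3, hprod, mul_zero, sub_zero] at hFa
      exact pow_eq_zero_iff three_ne_zero |>.mp hFa
    obtain ⟨i, hai⟩ : ∃ i, a i = 0 := by
      simpa [← Fin.prod_univ_three, Finset.prod_eq_zero_iff] using hprod
    exact ⟨i, hai, coord_eq_zero_of_mixedProd_eq_zero ha hai hsum hab, hsum⟩
  · rintro ⟨i, hai, hbi, hsa⟩
    have hsb : b 0 + b 1 + b 2 ≠ 0 := fun hsb =>
      hind (cross_eq_zero_of_coord_eq_zero hai hbi hsa hsb)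
    have hlr : lineRestrict (hesseCubic μ) a b =
        Polynomial.C ((b 0 + b 1 + b 2) ^ 3) * Polynomial.X ^ 3 := by
      simp [-map_add, -map_pow, lineRestrict_hesseCubic h3, eval_hesseCubic_of_three_eq_zero h3,
        hsa, prod_fin_three_eq_zero hai, prod_fin_three_eq_zero hbi,
        mixedProd_eq_zero_of_coord_eq_zero hai hbi, mixedProd_eq_zero_of_coord_eq_zero hbi hai]
    have hne : lineRestrict (hesseCubic μ) a b ≠ 0 := by simp [-map_add, -map_pow, hlr, hsb]
    refine ⟨hne, (le_contactAt_iff hne).2 fun m hm => ?_⟩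
    rw [hlr, Polynomial.coeff_C_mul_X_pow, if_neg hm.ne]

lemma isInflPoint_hesseCubic_iff (h3 : (3 : K) = 0) {μ : K} (hμ : μ ≠ 0) {p : Fin 3 → K}
    (hp : p ≠ 0) :
    IsInflPoint (hesseCubic μ) p ↔ ∃ i, p i = 0 ∧ p 0 + p 1 + p 2 = 0 := by
  constructor
  · rintro ⟨-, b, hind, hc⟩
    obtain ⟨i, hpi, -, hs⟩ := (three_le_contactAt_hesseCubic_iff h3 hμ hind).1 hc
    exact ⟨i, hpi, hs⟩
  · rintro ⟨i, hpi, hs⟩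
    obtain ⟨b, hbi, hind⟩ := exists_linearIndependent_of_coord_eq_zero hp hpi hs
    refine ⟨?_, b, hind, (three_le_contactAt_hesseCubic_iff h3 hμ hind).2 ⟨i, hpi, hbi, hs⟩⟩
    simp [eval_hesseCubic_of_three_eq_zero h3, hs, prod_fin_three_eq_zero hpi]

lemma isInflLine_hesseCubic_iff (h3 : (3 : K) = 0) {μ : K} (hμ : μ ≠ 0) {w : Fin 3 → K}
    (hw : w ≠ 0) :
    IsInflLine (hesseCubic μ) w ↔ ∃ i, ∀ j ≠ i, w j = 0 := by
  constructor
  · rintro ⟨-, a, b, hwa, hwb, hind, hc⟩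
    obtain ⟨i, hai, hbi, -⟩ := (three_le_contactAt_hesseCubic_iff h3 hμ hind).1 hc
    exact ⟨i, eq_zero_of_dotv_eq_zero hai hbi
      (crossProduct_ne_zero_iff_linearIndependent.2 hind) hwa hwb⟩
  · rintro ⟨i, hwi⟩
    obtain ⟨a, ha, hai, hsa⟩ : ∃ a : Fin 3 → K, a ≠ 0 ∧ a i = 0 ∧ a 0 + a 1 + a 2 = 0 := by
      refine ⟨Pi.single (i + 1) 1 - Pi.single (i + 2) 1, ?_, ?_, ?_⟩ <;>
        fin_cases i <;> simp [funext_iff, Fin.forall_fin_succ]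
    obtain ⟨b, hbi, hind⟩ := exists_linearIndependent_of_coord_eq_zero ha hai hsa
    have hdot (c : Fin 3 → K) (hci : c i = 0) : dotv w c = 0 :=
      Finset.sum_eq_zero fun j _ => by
        by_cases hj : j = i
        · simp [hj, hci]
        · simp [hwi j hj]
    exact ⟨hw, a, b, hdot a hai, hdot b hbi, hind,
      (three_le_contactAt_hesseCubic_iff h3 hμ hind).2 ⟨i, hai, hbi, hsa⟩⟩

theorem char_three_cubics_share_inflection_data
    (k : Type*) [Field k] [CharP k 3] :
    (∀ lam : k, lam ≠ 0 →
      -- `C_λ` is a smooth plane cubic (geometrically):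
      IsSmoothCurve (bar (hesseCubic lam)) 3 ∧
      -- its inflection points are exactly `[1,−1,0], [1,0,−1], [0,1,−1]`:
      (∀ p : Fin 3 → AlgebraicClosure k, p ≠ 0 →
        (IsInflPoint (bar (hesseCubic lam)) p ↔
          (propor p ![1, -1, 0] ∨ propor p ![1, 0, -1] ∨ propor p ![0, 1, -1]))) ∧
      -- its inflection lines are exactly the lines `x = 0`, `y = 0`, `z = 0`:
      (∀ w : Fin 3 → AlgebraicClosure k, w ≠ 0 →
        (IsInflLine (bar (hesseCubic lam)) w ↔
          (propor w ![1, 0, 0] ∨ propor w ![0, 1, 0] ∨ propor w ![0, 0, 1])))) ∧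
    -- in particular distinct members of the family are distinct curves sharing all
    -- their inflection points and inflection lines, so a smooth plane cubic cannot be
    -- recovered from these data in characteristic 3:
    (∀ lam₁ lam₂ : k, lam₁ ≠ 0 → lam₂ ≠ 0 → lam₁ ≠ lam₂ →
      ¬ ∃ c : k, hesseCubic lam₂ = c • hesseCubic lam₁) := by
  refine ⟨fun lam hlam => ?_, fun lam₁ lam₂ _ _ hne ⟨c, hc⟩ => hne (eq_of_hesseCubic_eq_smul hc)⟩
  have h3 : (3 : AlgebraicClosure k) = 0 := by exact_mod_cast CharP.cast_eq_zero _ 3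
  have hμ : algebraMap k (AlgebraicClosure k) lam ≠ 0 := by simpa using hlam
  rw [bar_hesseCubic]
  exact ⟨isSmoothCurve_hesseCubic h3 hμ,
    fun p hp => (isInflPoint_hesseCubic_iff h3 hμ hp).trans (exists_coord_eq_zero_iff_propor hp),
    fun w hw => (isInflLine_hesseCubic_iff h3 hμ hw).trans (exists_forall_ne_eq_zero_iff_propor hw)⟩

end Infl
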